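/- Let {s_k} be least nonnegative residues mod m. If ∑_{k=0}^∞ (m/(m+1))^k s_k converges to 0 in D_m with the m-adic metric, then s_k = 0 for all k. Consequently, two such series with the same limit have equal coefficient sequences. -/

import Mathlib

def Dm (m : ℕ) : Set ℚ := {q : ℚ | Nat.Coprime q.den m}

noncomputable def mnorm (m : ℕ) (q : ℚ) : ℝ :=
  if q = 0 then 0 else (m : ℝ) ^ (-(m.maxPowDiv q.num.natAbs : ℤ))

noncomputable def mdist (m : ℕ) (x y : ℚ) : ℝ := mnorm m (x - y)

/-!
Let `j` be the first index with `u j ≠ 0`. Clearing the denominator `(m + 1) ^ n` turns the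
`n`-th partial sum into an integer congruent to `u j * m ^ j * (m + 1) ^ (n - j)` modulo
`m ^ (j + 1)`, which `m ^ (j + 1)` does not divide since `0 < |u j| < m` and `m` is coprime to
`m + 1`. So `m ^ (j + 1)` never divides the numerator of a late partial sum, whereas convergence
to `0` forces every power of `m` to divide it eventually. For two series with the same limit,
divisibility of numerators by `m ^ K` passes to differences, and the digits `s k - t k` still
satisfy `|s k - t k| < m`.
-/

open Finset Filter Topology

lemma dvd_num_add {d : ℤ} {x y : ℚ} (hx : d ∣ x.num) (hy : d ∣ y.num) : d ∣ (x + y).num := by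
  have coprime_den {q : ℚ} (hq : d ∣ q.num) : IsCoprime d q.den :=
    q.isCoprime_num_den.of_isCoprime_of_dvd_left hq
  have hsum : d ∣ (x + y).num * (x.den * y.den) := by
    rw [← mul_assoc, Rat.add_num_den']
    exact ((hx.mul_right _).add (hy.mul_right _)).mul_right _
  exact ((coprime_den hx).mul_right (coprime_den hy)).dvd_of_dvd_mul_right hsum

lemma dvd_num_sub {d : ℤ} {x y : ℚ} (hx : d ∣ x.num) (hy : d ∣ y.num) : d ∣ (x - y).num := by
  rw [sub_eq_add_neg]
  exact dvd_num_add hx (by rwa [Rat.num_neg_eq_neg_num, dvd_neg])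

lemma pow_dvd_num_of_mnorm_lt {m K : ℕ} (hm : 2 ≤ m) {q : ℚ}
    (h : mnorm m q < (m : ℝ) ^ (-(K : ℤ))) : (m : ℤ) ^ K ∣ q.num := by
  unfold mnorm at h
  split_ifs at h with hq
  · simp [hq]
  · -- `Nat.maxPowDiv` is now an alias of `padicValNat`, defined for every base `m`.
    have hK : K < padicValNat m q.num.natAbs :=
      Int.ofNat_lt.mp (neg_lt_neg_iff.mp ((zpow_lt_zpow_iff_right₀ (by exact_mod_cast hm)).mp h))
    rw [← Int.dvd_natAbs]
    exact_mod_cast (pow_dvd_pow m hK.le).trans pow_padicValNat_dvd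

lemma eventually_pow_dvd_num_of_tendsto {ι : Type*} {l : Filter ι} {m : ℕ} (hm : 2 ≤ m)
    {f : ι → ℚ} (h : Tendsto (fun i => mnorm m (f i)) l (𝓝 0)) (K : ℕ) :
    ∀ᶠ i in l, (m : ℤ) ^ K ∣ (f i).num :=
  (h.eventually (gt_mem_nhds (zpow_pos (by positivity) _))).mono
    fun _ => pow_dvd_num_of_mnorm_lt hm

def partialSum (m : ℕ) (u : ℕ → ℤ) (n : ℕ) : ℚ :=
  ∑ k ∈ range n, ((m : ℚ) / ((m : ℚ) + 1)) ^ k * u k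

def clearedPartialSum (m : ℤ) (u : ℕ → ℤ) (n : ℕ) : ℤ :=
  ∑ k ∈ range n, u k * m ^ k * (m + 1) ^ (n - k)

lemma partialSum_eq_div (m : ℕ) (u : ℕ → ℤ) (n : ℕ) :
    partialSum m u n = clearedPartialSum m u n / (((m : ℤ) + 1) ^ n : ℤ) := by
  rw [eq_div_iff (by positivity), partialSum, clearedPartialSum, sum_mul]
  push_cast
  refine sum_congr rfl fun k hk => ?_
  rw [← Nat.sub_add_cancel (mem_range.mp hk).le, pow_add, Nat.add_sub_cancel, div_pow]
  field_simp

lemma partialSum_sub (m : ℕ) (u v : ℕ → ℤ) (n : ℕ) :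
    partialSum m (u - v) n = partialSum m u n - partialSum m v n := by
  simp only [partialSum, Pi.sub_apply, Int.cast_sub, mul_sub, sum_sub_distrib]

lemma not_pow_succ_dvd_mul_pow {m a : ℤ} (hm : m ≠ 0) (ha : ¬ m ∣ a) (j e : ℕ) :
    ¬ m ^ (j + 1) ∣ a * m ^ j * (m + 1) ^ e := by
  rw [pow_succ, mul_comm a, mul_assoc, mul_dvd_mul_iff_left (pow_ne_zero j hm)]
  exact fun h => ha ((IsCoprime.pow_right ⟨-1, 1, by ring⟩).dvd_of_dvd_mul_right h)

lemma not_pow_succ_dvd_clearedPartialSum {m : ℤ} (hm : m ≠ 0) {u : ℕ → ℤ} {j n : ℕ}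
    (hjn : j < n) (hlow : ∀ k < j, u k = 0) (hj : ¬ m ∣ u j) :
    ¬ m ^ (j + 1) ∣ clearedPartialSum m u n := by
  have hrest : m ^ (j + 1) ∣ ∑ k ∈ (range n).erase j, u k * m ^ k * (m + 1) ^ (n - k) := by
    refine dvd_sum fun k hk => ?_
    obtain hkj | hkj := lt_or_gt_of_ne (mem_erase.mp hk).1
    · simp [hlow k hkj]
    · exact ((pow_dvd_pow m hkj).trans (dvd_mul_left _ _)).mul_right _
  rw [clearedPartialSum, ← add_sum_erase _ _ (mem_range.mpr hjn), dvd_add_left hrest]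
  exact not_pow_succ_dvd_mul_pow hm hj j (n - j)

lemma eq_zero_of_eventually_pow_dvd_num_partialSum {m : ℕ} (hm : m ≠ 0) {u : ℕ → ℤ}
    (hdigit : ∀ k, (m : ℤ) ∣ u k → u k = 0)
    (h : ∀ K, ∀ᶠ n in atTop, (m : ℤ) ^ K ∣ (partialSum m u n).num) (k : ℕ) : u k = 0 := by
  classical
  by_contra hk
  have hex : ∃ k, u k ≠ 0 := ⟨k, hk⟩
  set j := Nat.find hex
  have hlow : ∀ i < j, u i = 0 := fun i hi => not_not.mp (Nat.find_min hex hi)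
  obtain ⟨n, hdvd, hjn⟩ := ((h (j + 1)).and (eventually_gt_atTop j)).exists
  rw [partialSum_eq_div, ← Rat.divInt_eq_div] at hdvd
  exact not_pow_succ_dvd_clearedPartialSum (by exact_mod_cast hm) hjn hlow
    (mt (hdigit j) (Nat.find_spec hex)) (hdvd.trans (Rat.num_dvd _ (by positivity)))

theorem rotation_series_unique (m : ℕ) (hm : 2 ≤ m) :
    (∀ s : ℕ → ℕ, (∀ k, s k ≤ m - 1) →
      Filter.Tendsto
        (fun n => mdist m
          (∑ k ∈ Finset.range n, ((m : ℚ) / ((m : ℚ) + 1)) ^ k * (s k : ℚ)) 0)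
        Filter.atTop (nhds 0) →
      ∀ k, s k = 0) ∧
    (∀ s t : ℕ → ℕ, (∀ k, s k ≤ m - 1) → (∀ k, t k ≤ m - 1) → ∀ L ∈ Dm m,
      Filter.Tendsto
        (fun n => mdist m
          (∑ k ∈ Finset.range n, ((m : ℚ) / ((m : ℚ) + 1)) ^ k * (s k : ℚ)) L)
        Filter.atTop (nhds 0) →
      Filter.Tendsto
        (fun n => mdist m
          (∑ k ∈ Finset.range n, ((m : ℚ) / ((m : ℚ) + 1)) ^ k * (t k : ℚ)) L)
        Filter.atTop (nhds 0) →
      ∀ k, s k = t k) := by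
  have hm0 : m ≠ 0 := by omega
  have hdigit {u : ℕ → ℤ} (hu : ∀ k, (u k).natAbs < m) (k : ℕ) : (m : ℤ) ∣ u k → u k = 0 :=
    fun hdvd => Int.eq_zero_of_dvd_of_natAbs_lt_natAbs hdvd (hu k)
  have partialSum_natCast (s : ℕ → ℕ) (n : ℕ) : partialSum m (fun k => s k) n =
      ∑ k ∈ range n, ((m : ℚ) / ((m : ℚ) + 1)) ^ k * (s k : ℚ) := by
    simp [partialSum]
  constructor
  · intro s hs hlim k
    have h := eventually_pow_dvd_num_of_tendsto hm (f := partialSum m fun k => s k)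
      (by simpa [mdist, partialSum_natCast] using hlim)
    exact_mod_cast eq_zero_of_eventually_pow_dvd_num_partialSum hm0
      (hdigit fun k => by have := hs k; omega) h k
  · intro s t hs ht L _ hlimS hlimT k
    have h (K : ℕ) : ∀ᶠ n in atTop,
        (m : ℤ) ^ K ∣ (partialSum m ((fun k => (s k : ℤ)) - fun k => (t k : ℤ)) n).num := by
      filter_upwards [eventually_pow_dvd_num_of_tendsto hm hlimS K,
        eventually_pow_dvd_num_of_tendsto hm hlimT K] with n hS hT
      rw [partialSum_sub, partialSum_natCast, partialSum_natCast, ← sub_sub_sub_cancel_right _ _ L]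
      exact dvd_num_sub hS hT
    have := eq_zero_of_eventually_pow_dvd_num_partialSum hm0
      (hdigit fun k => by have := hs k; have := ht k; simp only [Pi.sub_apply]; omega) h k
    simp only [Pi.sub_apply, sub_eq_zero] at this
    exact_mod_cast this
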